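/- arXiv:1406.0797 — 4 statements merged into one kernel-verified Lean document; each statement's English description precedes it below -/
import Mathlib

section
/- Let (n_k)_{k≥1} be a sequence of positive integers with n_{k+1}/n_k ≥ 3 for all k. For a subset A of {n_k : k ∈ ℕ}, define Ã to be the set of all finite sums Σ_{l=1}^m ε_l a_l where ε_l ∈ {−1, 0, 1} and the a_l are distinct elements of A. If A and B are subsets of {n_k : k ∈ ℕ} with A ∩ B finite, then Ã ∩ B̃ is finite. -/
/-- For a set `A` of integers, `tildeSet A` is the set of all finite sums
`∑ ε_l * a_l` where `ε_l ∈ {-1, 0, 1}` and the `a_l` are distinct elements of `A`. -/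
def tildeSet (A : Set ℤ) : Set ℤ :=
  {x : ℤ | ∃ (s : Finset ℤ) (ε : ℤ → ℤ), ↑s ⊆ A ∧ (∀ a ∈ s, ε a = -1 ∨ ε a = 0 ∨ ε a = 1) ∧
    x = ∑ a ∈ s, ε a * a}

/-!
If every element of `S` exceeds twice the sum of all smaller elements of `S`, then a signed sum
`∑ ε a * a` over `a ∈ S` with `ε a ∈ {-1, 0, 1}` determines the coefficients: the difference of
two such representations has coefficients in `[-2, 2]`, and its largest nonzero term would outweigh
all the others. Hence a common element of `Ã` and `B̃` only uses elements of `A ∩ B`, so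
`Ã ∩ B̃` is contained in the set of signed sums over the finite set `A ∩ B`, which is bounded.
A lacunary sequence with ratio at least `3` has this property.
-/

open Finset

def IsSuperincreasing (m : ℕ) (S : Set ℤ) : Prop :=
  ∀ a ∈ S, ∀ t : Finset ℤ, ↑t ⊆ S → (∀ b ∈ t, b < a) → m * ∑ b ∈ t, b < a

lemma abs_ite_mem_le_one {s : Finset ℤ} {ε : ℤ → ℤ}
    (hε : ∀ a ∈ s, ε a = -1 ∨ ε a = 0 ∨ ε a = 1) (a : ℤ) :
    |if a ∈ s then ε a else 0| ≤ 1 := by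
  split_ifs with h
  · rcases hε a h with h | h | h <;> simp [h]
  · simp

namespace IsSuperincreasing

variable {m : ℕ} {S : Set ℤ}

lemma pos (hS : IsSuperincreasing m S) {a : ℤ} (ha : a ∈ S) : 0 < a := by
  simpa using hS a ha ∅ (by simp) (by simp)

lemma eq_zero_of_sum_mul_eq_zero (hS : IsSuperincreasing m S) (s : Finset ℤ) (hs : ↑s ⊆ S)
    (c : ℤ → ℤ) (hc : ∀ a ∈ s, |c a| ≤ m) (hsum : ∑ a ∈ s, c a * a = 0) :
    ∀ a ∈ s, c a = 0 := by
  induction s using Finset.induction_on_max with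
  | empty => simp
  | insert a s hlt ih =>
    have ha : a ∈ S := hs (mem_insert_self a s)
    have hsS : ↑s ⊆ S := fun b hb => hs (mem_insert_of_mem hb)
    have hrest : |∑ b ∈ s, c b * b| < a :=
      calc |∑ b ∈ s, c b * b| ≤ ∑ b ∈ s, |c b * b| := abs_sum_le_sum_abs _ _
        _ ≤ ∑ b ∈ s, m * b := sum_le_sum fun b hb => by
          rw [abs_mul, abs_of_pos (hS.pos (hsS hb))]
          exact mul_le_mul_of_nonneg_right (hc b (mem_insert_of_mem hb)) (hS.pos (hsS hb)).le
        _ = m * ∑ b ∈ s, b := (mul_sum _ _ _).symm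
        _ < a := hS a ha s hsS hlt
    rw [sum_insert fun h => (hlt a h).false] at hsum
    have hca : c a = 0 := by
      by_contra hne
      have hlead : a ≤ |c a * a| := by
        rw [abs_mul, abs_of_pos (hS.pos ha)]
        exact le_mul_of_one_le_left (hS.pos ha).le (Int.one_le_abs hne)
      rw [eq_neg_of_add_eq_zero_left hsum, abs_neg] at hlead
      linarith
    rw [hca, zero_mul, zero_add] at hsum
    intro b hb
    rcases mem_insert.1 hb with rfl | hb
    · exact hca
    · exact ih hsS (fun b hb => hc b (mem_insert_of_mem hb)) hsum b hb

lemma tildeSet_inter_subset (hS : IsSuperincreasing 2 S) {A B : Set ℤ} (hA : A ⊆ S)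
    (hB : B ⊆ S) : tildeSet A ∩ tildeSet B ⊆ tildeSet (A ∩ B) := by
  rintro x ⟨⟨s, ε, hsA, hε, rfl⟩, ⟨t, η, htB, hη, hx⟩⟩
  set ε' : ℤ → ℤ := fun a => if a ∈ s then ε a else 0 with hε'
  set η' : ℤ → ℤ := fun a => if a ∈ t then η a else 0 with hη'
  have hsum : ∑ a ∈ s ∪ t, (ε' a - η' a) * a = 0 := by
    simp only [hε', hη', sub_mul, ite_mul, zero_mul, sum_sub_distrib, sum_ite_mem,
      union_inter_cancel_left, union_inter_cancel_right, hx, sub_self]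
  have hcoef : ∀ a ∈ s ∪ t, |ε' a - η' a| ≤ 2 := fun a _ => by
    have h₁ : |ε' a| ≤ 1 := abs_ite_mem_le_one hε a
    have h₂ : |η' a| ≤ 1 := abs_ite_mem_le_one hη a
    linarith [abs_sub (ε' a) (η' a)]
  have hzero := hS.eq_zero_of_sum_mul_eq_zero (s ∪ t)
    (by rw [coe_union]; exact Set.union_subset (hsA.trans hA) (htB.trans hB)) _ hcoef hsum
  refine ⟨s ∩ t, ε, ?_, fun a ha => hε a (mem_of_mem_inter_left ha), ?_⟩
  · rw [coe_inter]; exact Set.inter_subset_inter hsA htB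
  · refine (sum_subset inter_subset_left fun a has hast => ?_).symm
    have hat : a ∉ t := fun hat => hast (mem_inter.2 ⟨has, hat⟩)
    have := hzero a (mem_union_left t has)
    simp only [hε', hη', has, hat, if_true, if_false, sub_zero] at this
    rw [this, zero_mul]

end IsSuperincreasing

lemma mul_sum_range_lt_of_lacunary {m : ℕ} {n : ℕ → ℕ} (h₀ : 0 < n 0)
    (hlac : ∀ k, (m + 1) * n k ≤ n (k + 1)) (K : ℕ) : m * ∑ k ∈ range K, n k < n K := by
  induction K with
  | zero => simpa using h₀
  | succ K ih =>
    rw [sum_range_succ, mul_add]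
    linarith [hlac K]

lemma isSuperincreasing_range_of_lacunary {m : ℕ} {n : ℕ → ℕ} (h₀ : 0 < n 0)
    (hlac : ∀ k, (m + 1) * n k ≤ n (k + 1)) :
    IsSuperincreasing m (Set.range fun k => (n k : ℤ)) := by
  have hmono : Monotone n := monotone_nat_of_le_succ fun k => by nlinarith [hlac k]
  rintro _ ⟨K, rfl⟩ t ht hlt
  have htK : t ⊆ (range K).image fun k => (n k : ℤ) := fun b hb => by
    obtain ⟨j, rfl⟩ := ht hb
    exact mem_image_of_mem _ (mem_range.2 (hmono.reflect_lt (by simpa using hlt _ hb)))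
  have hnonneg : ∀ b ∈ (range K).image fun k => (n k : ℤ), 0 ≤ b := fun b hb => by
    obtain ⟨j, -, rfl⟩ := mem_image.1 hb
    exact Int.natCast_nonneg _
  have hsum : ∑ b ∈ t, b ≤ ∑ k ∈ range K, (n k : ℤ) :=
    calc ∑ b ∈ t, b ≤ ∑ b ∈ (range K).image fun k => (n k : ℤ), b :=
          sum_le_sum_of_subset_of_nonneg htK fun b hb _ => hnonneg b hb
      _ ≤ ∑ k ∈ range K, (n k : ℤ) := sum_image_le_of_nonneg hnonneg
  calc (m : ℤ) * ∑ b ∈ t, b ≤ m * ∑ k ∈ range K, (n k : ℤ) := by gcongr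
    _ < n K := by exact_mod_cast mul_sum_range_lt_of_lacunary h₀ hlac K

lemma tildeSet_finite {A : Set ℤ} (hA : A.Finite) : (tildeSet A).Finite := by
  refine (Set.finite_Icc (-∑ a ∈ hA.toFinset, |a|) (∑ a ∈ hA.toFinset, |a|)).subset ?_
  rintro _ ⟨s, ε, hsA, hε, rfl⟩
  rw [Set.mem_Icc, ← abs_le]
  calc |∑ a ∈ s, ε a * a| ≤ ∑ a ∈ s, |ε a * a| := abs_sum_le_sum_abs _ _
    _ ≤ ∑ a ∈ s, |a| := sum_le_sum fun a ha => by
        rw [abs_mul]; rcases hε a ha with h | h | h <;> simp [h]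
    _ ≤ ∑ a ∈ hA.toFinset, |a| := sum_le_sum_of_subset_of_nonneg
        (fun a ha => hA.mem_toFinset.2 (hsA ha)) fun a _ _ => abs_nonneg a

theorem stmt_2 (n : ℕ → ℕ) (hpos : ∀ k, 0 < n k) (hlac : ∀ k, 3 * n k ≤ n (k + 1))
    (A B : Set ℤ) (hA : A ⊆ Set.range fun k => (n k : ℤ))
    (hB : B ⊆ Set.range fun k => (n k : ℤ)) (hAB : (A ∩ B).Finite) :
    (tildeSet A ∩ tildeSet B).Finite :=
  have hS : IsSuperincreasing 2 (Set.range fun k => (n k : ℤ)) :=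
    isSuperincreasing_range_of_lacunary (hpos 0) hlac
  (tildeSet_finite hAB).subset (hS.tildeSet_inter_subset hA hB)
end

section
/- Let α be a real number with α/π irrational, and suppose there exist complex numbers b_n and integers l_n such that −inα = b_n + 2πi l_n for all n ∈ ℤ, where the sequence (b_n)_{n∈ℤ} is almost periodic (as a sequence of complex numbers). Then a contradiction follows; i.e., no such almost periodic sequence exists. -/
open Real

/-- A sequence `(a n)` indexed by `ℤ` is almost periodic if for every `ε > 0` there exists
`p > 0` such that every interval of integers of length `p` contains an `m` with
`|a (n + m) - a n| < ε` for all `n`. -/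
def AlmostPeriodic (a : ℤ → ℂ) : Prop :=
  ∀ ε : ℝ, 0 < ε → ∃ p : ℕ, 0 < p ∧ ∀ N : ℤ, ∃ m : ℤ, N ≤ m ∧ m < N + p ∧
    ∀ n : ℤ, ‖a (n + m) - a n‖ < ε

/-!
A `1`-almost period `m ≥ 1` of `b` forces `mα + 2π (l (n + m) - l n)` to lie in `(-1, 1)` for
every `n`; since `2π > 2`, the integer `l (n + m) - l n = d` cannot depend on `n`. Hence
`b (n + m) - b n` is the constant `-i (mα + 2πd)`, which is nonzero because `α / π` is
irrational. But an almost periodic sequence is bounded, so it cannot grow linearly along the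
progression `k m`.
-/

namespace AlmostPeriodic

variable {a : ℤ → ℂ}

theorem exists_norm_le (ha : AlmostPeriodic a) : ∃ C, ∀ n, ‖a n‖ ≤ C := by
  obtain ⟨p, -, hP⟩ := ha 1 one_pos
  refine ⟨1 + ∑ j ∈ Finset.Ico (0 : ℤ) p, ‖a j‖, fun n => ?_⟩
  obtain ⟨m, hm₁, hm₂, hm⟩ := hP (n - p + 1)
  have hj : n - m ∈ Finset.Ico (0 : ℤ) p := by
    rw [Finset.mem_Ico]
    omega
  calc ‖a n‖ ≤ ‖a (n - m + m) - a (n - m)‖ + ‖a (n - m)‖ := by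
        simpa using norm_le_norm_sub_add (a n) (a (n - m))
    _ ≤ 1 + ∑ j ∈ Finset.Ico (0 : ℤ) p, ‖a j‖ :=
        add_le_add (hm _).le (Finset.single_le_sum (fun j _ => norm_nonneg (a j)) hj)

theorem eq_zero_of_forall_add_sub_eq (ha : AlmostPeriodic a) {m : ℤ} {c : ℂ}
    (hc : ∀ n, a (n + m) - a n = c) : c = 0 := by
  obtain ⟨C, hC⟩ := ha.exists_norm_le
  have hiter : ∀ k : ℕ, a (k * m) = a 0 + k * c := by
    intro k
    induction k with
    | zero => simp
    | succ k ih =>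
      push_cast [add_one_mul]
      linear_combination hc (k * m) + ih
  by_contra hc0
  obtain ⟨k, hk⟩ := exists_nat_gt (2 * C / ‖c‖)
  rw [div_lt_iff₀ (norm_pos_iff.2 hc0)] at hk
  have hbound : (k : ℝ) * ‖c‖ ≤ 2 * C :=
    calc (k : ℝ) * ‖c‖ = ‖a (k * m) - a 0‖ := by simp [hiter]
      _ ≤ ‖a (k * m)‖ + ‖a 0‖ := norm_sub_le _ _
      _ ≤ 2 * C := by linarith [hC (k * m), hC 0]
  linarith

end AlmostPeriodic

theorem eq_of_abs_add_two_pi_mul_lt_one {x : ℝ} {j k : ℤ} (hj : |x + 2 * π * j| < 1)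
    (hk : |x + 2 * π * k| < 1) : j = k := by
  by_contra hne
  have hone : (1 : ℝ) ≤ |(j : ℝ) - k| := by
    exact_mod_cast Int.one_le_abs (sub_ne_zero.2 hne)
  have htwo : 2 * π * |(j : ℝ) - k| < 2 :=
    calc 2 * π * |(j : ℝ) - k| = |(x + 2 * π * j) - (x + 2 * π * k)| := by
          rw [← abs_of_pos two_pi_pos, ← abs_mul, abs_of_pos two_pi_pos]
          ring_nf
      _ ≤ |x + 2 * π * j| + |x + 2 * π * k| := abs_sub _ _
      _ < 2 := by linarith
  nlinarith [pi_gt_three]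

theorem Irrational.int_mul_add_two_pi_mul_int_ne_zero {α : ℝ} (hα : Irrational (α / π))
    {m : ℤ} (hm : m ≠ 0) (d : ℤ) : m * α + 2 * π * d ≠ 0 := by
  intro h0
  refine hα ⟨-2 * d / m, ?_⟩
  have hm' : (m : ℝ) ≠ 0 := Int.cast_ne_zero.2 hm
  push_cast
  field_simp
  linarith

theorem stmt_4 (α : ℝ) (hα : Irrational (α / π)) (b : ℤ → ℂ) (l : ℤ → ℤ)
    (hb : AlmostPeriodic b)
    (h : ∀ n : ℤ, -(n * α * Complex.I) = b n + 2 * π * Complex.I * l n) :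
    False := by
  have hdiff : ∀ n k : ℤ,
      b (n + k) - b n = -((k * α + 2 * π * (l (n + k) - l n : ℤ) : ℝ) : ℂ) * Complex.I := by
    intro n k
    have hnk := h (n + k)
    push_cast at hnk ⊢
    linear_combination h n - hnk
  obtain ⟨p, -, hP⟩ := hb 1 one_pos
  obtain ⟨m, hm, -, hm_small⟩ := hP 1
  have hsmall : ∀ n, |m * α + 2 * π * (l (n + m) - l n : ℤ)| < 1 := by
    intro n
    simpa only [hdiff, norm_mul, norm_neg, Complex.norm_I, mul_one, Complex.norm_real,
      Real.norm_eq_abs] using hm_small n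
  have hconst : ∀ n, l (n + m) - l n = l m - l 0 := fun n =>
    eq_of_abs_add_two_pi_mul_lt_one (hsmall n) (by simpa using hsmall 0)
  refine hα.int_mul_add_two_pi_mul_int_ne_zero (m := m) (by omega) (l m - l 0) ?_
  have hzero := hb.eq_zero_of_forall_add_sub_eq (fun n => by rw [hdiff, hconst])
  rwa [mul_eq_zero, neg_eq_zero, Complex.ofReal_eq_zero, or_iff_left Complex.I_ne_zero] at hzero
end

section
/- Let μ be a finite discrete (purely atomic) complex Borel measure on the circle group 𝕋. Then the sequence of Fourier–Stieltjes coefficients (μ̂(n))_{n∈ℤ}, where μ̂(n) = ∫ e^{−int} dμ(t), is almost periodic. -/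
/-!
Writing `μ = ∑ c j δ_{t j}`, the difference `μ̂ (n + m) - μ̂ n` is bounded, uniformly in `n`, by
`∑ ‖c j‖ ‖e^{-i m t j} - 1‖`. Cutting off a tail of small mass leaves finitely many points
`t j`, and the orbit `m ↦ (e^{-i m t j})_j` in the compact torus returns near its starting point
along a relatively dense set of times: a finite `δ`-net of the orbit consists of finitely many
orbit points, and translating any `m` back into the window they span lands within `δ` of one
of them.
-/

open Real

def IsRelativelyDense (S : Set ℤ) : Prop :=
  ∃ p : ℕ, 0 < p ∧ ∀ N : ℤ, ∃ m : ℤ, N ≤ m ∧ m < N + p ∧ m ∈ S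

theorem IsRelativelyDense.mono {S S' : Set ℤ} (hS : IsRelativelyDense S) (h : S ⊆ S') :
    IsRelativelyDense S' := by
  obtain ⟨p, hp, hS⟩ := hS
  exact ⟨p, hp, fun N => (hS N).imp fun m ⟨hNm, hmN, hm⟩ => ⟨hNm, hmN, h hm⟩⟩

theorem almostPeriodic_iff_isRelativelyDense (a : ℤ → ℂ) :
    AlmostPeriodic a ↔ ∀ ε > 0, IsRelativelyDense {m | ∀ n, ‖a (n + m) - a n‖ < ε} :=
  Iff.rfl

theorem isRelativelyDense_dist_lt_of_totallyBounded {X : Type*} [PseudoMetricSpace X]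
    (u : ℤ → X) (hu : TotallyBounded (Set.range u))
    (hshift : ∀ a b k, dist (u (a + k)) (u (b + k)) = dist (u a) (u b)) {δ : ℝ} (hδ : 0 < δ) :
    IsRelativelyDense {m | dist (u m) (u 0) < δ} := by
  obtain ⟨v, hv_orbit, hv_fin, hv_cover⟩ :=
    totallyBounded_iff_subset.mp hu _ (Metric.dist_mem_uniformity hδ)
  obtain ⟨F, -, hF_fin, rfl⟩ :=
    hv_fin.exists_subset_finite_image_eq (s := Set.univ) (Set.image_univ ▸ hv_orbit)
  obtain ⟨R, hR⟩ : ∃ R : ℕ, ∀ k ∈ F, |k| ≤ R :=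
    ⟨hF_fin.toFinset.sup Int.natAbs, fun k hk => by
      rw [Int.abs_eq_natAbs, Nat.cast_le]
      exact Finset.le_sup (f := Int.natAbs) (hF_fin.mem_toFinset.mpr hk)⟩
  refine ⟨2 * R + 1, by omega, fun N => ?_⟩
  obtain ⟨_, ⟨k, hkF, rfl⟩, hk⟩ := Set.mem_iUnion₂.mp (hv_cover (Set.mem_range_self (-R - N)))
  have hkR := abs_le.mp (hR k hkF)
  refine ⟨k + R + N, by omega, by push_cast; omega, ?_⟩
  have hback := hshift k (-R - N) (R + N)
  rw [show -R - N + (R + N) = 0 by ring] at hback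
  show dist (u (k + R + N)) (u 0) < δ
  rwa [add_assoc, hback, dist_comm]

section Fourier

variable {T : ℝ}

theorem norm_fourier_apply (n : ℤ) (x : AddCircle T) : ‖fourier n x‖ = 1 :=
  Circle.norm_coe _

theorem norm_fourier_apply_sub_one_le (n : ℤ) (x : AddCircle T) : ‖fourier n x - 1‖ ≤ 2 :=
  (norm_sub_le _ _).trans_eq (by rw [norm_fourier_apply, norm_one, one_add_one_eq_two])

theorem isRelativelyDense_forall_norm_fourier_sub_one_lt {ι : Type*} (t : ι → AddCircle T)
    (s : Finset ι) {δ : ℝ} (hδ : 0 < δ) :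
    IsRelativelyDense {m : ℤ | ∀ j ∈ s, ‖fourier (-m) (t j) - 1‖ < δ} := by
  let u : ℤ → (s → ℂ) := fun m j => fourier (-m) (t j)
  have hu : TotallyBounded (Set.range u) := by
    refine (isCompact_closedBall (0 : s → ℂ) 1).totallyBounded.subset ?_
    rintro _ ⟨m, rfl⟩
    simp only [Metric.mem_closedBall, dist_zero_right, pi_norm_le_iff_of_nonneg zero_le_one, u,
      norm_fourier_apply, le_refl, implies_true]
  have hshift : ∀ a b k, dist (u (a + k)) (u (b + k)) = dist (u a) (u b) := by
    intro a b k
    have (j : s) : nndist (u (a + k) j) (u (b + k) j) = nndist (u a j) (u b j) := by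
      simp only [u, nndist_eq_nnnorm, neg_add, fourier_add, ← sub_mul, nnnorm_mul,
        ← NNReal.coe_inj, NNReal.coe_mul, coe_nnnorm, norm_fourier_apply, mul_one]
    simp only [dist_pi_def, this]
  refine (isRelativelyDense_dist_lt_of_totallyBounded u hu hshift hδ).mono fun m hm j hj => ?_
  have := (dist_le_pi_dist (u m) (u 0) ⟨j, hj⟩).trans_lt hm
  simpa [u, dist_eq_norm, fourier_zero] using this

end Fourier

theorem tsum_mul_le_of_le_on_finset {ι : Type*} {w f : ι → ℝ} {C δ : ℝ} (hw : Summable w)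
    (hw0 : ∀ j, 0 ≤ w j) (hf0 : ∀ j, 0 ≤ f j) (hfC : ∀ j, f j ≤ C) (hδ : 0 ≤ δ) (s : Finset ι)
    (hfs : ∀ j ∈ s, f j ≤ δ) :
    ∑' j, w j * f j ≤ δ * ∑' j, w j + C * ∑' j : {j // j ∉ s}, w j := by
  have hwf : Summable fun j => w j * f j := (hw.mul_right C).of_nonneg_of_le
    (fun j => mul_nonneg (hw0 j) (hf0 j)) (fun j => mul_le_mul_of_nonneg_left (hfC j) (hw0 j))
  have hhead : ∑ j ∈ s, w j * f j ≤ δ * ∑' j, w j := calc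
    ∑ j ∈ s, w j * f j ≤ ∑ j ∈ s, w j * δ :=
      Finset.sum_le_sum fun j hj => mul_le_mul_of_nonneg_left (hfs j hj) (hw0 j)
    _ = δ * ∑ j ∈ s, w j := by rw [← Finset.sum_mul, mul_comm]
    _ ≤ δ * ∑' j, w j := mul_le_mul_of_nonneg_left (hw.sum_le_tsum s fun j _ => hw0 j) hδ
  have htail : ∑' j : ↑(↑s : Set ι)ᶜ, w j * f j ≤ C * ∑' j : {j // j ∉ s}, w j := calc
    _ ≤ ∑' j : ↑(↑s : Set ι)ᶜ, w j * C := (hwf.subtype _).tsum_le_tsum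
      (fun j => mul_le_mul_of_nonneg_left (hfC j) (hw0 j)) ((hw.subtype _).mul_right C)
    _ = C * ∑' j : {j // j ∉ s}, w j := by rw [tsum_mul_right, mul_comm]; rfl
  rw [← hwf.sum_add_tsum_compl (s := s)]
  exact add_le_add hhead htail

section DiscreteMeasure

variable {ι : Type*} {T : ℝ} (c : ι → ℂ) (t : ι → AddCircle T)

theorem summable_norm_mul_norm_fourier_sub_one (hc : Summable fun j => ‖c j‖) (m : ℤ) :
    Summable fun j => ‖c j‖ * ‖fourier m (t j) - 1‖ :=
  (hc.mul_right 2).of_nonneg_of_le (fun j => by positivity)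
    (fun j => mul_le_mul_of_nonneg_left (norm_fourier_apply_sub_one_le _ _) (norm_nonneg _))

theorem norm_tsum_mul_fourier_add_sub_le (hc : Summable fun j => ‖c j‖) (m n : ℤ) :
    ‖∑' j, c j * fourier (-(n + m)) (t j) - ∑' j, c j * fourier (-n) (t j)‖ ≤
      ∑' j, ‖c j‖ * ‖fourier (-m) (t j) - 1‖ := by
  have hsum (k : ℤ) : Summable fun j => c j * fourier k (t j) :=
    Summable.of_norm (by simpa only [norm_mul, norm_fourier_apply, mul_one] using hc)
  have hterm (j : ι) : c j * fourier (-(n + m)) (t j) - c j * fourier (-n) (t j) =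
      c j * fourier (-n) (t j) * (fourier (-m) (t j) - 1) := by
    rw [neg_add, fourier_add]; ring
  rw [← (hsum _).tsum_sub (hsum _)]
  refine tsum_of_norm_bounded (summable_norm_mul_norm_fourier_sub_one c t hc (-m)).hasSum
    fun j => le_of_eq ?_
  rw [hterm, norm_mul, norm_mul, norm_fourier_apply, mul_one]

theorem isRelativelyDense_tsum_norm_mul_norm_fourier_sub_one_lt (hc : Summable fun j => ‖c j‖)
    {ε : ℝ} (hε : 0 < ε) :
    IsRelativelyDense {m : ℤ | ∑' j, ‖c j‖ * ‖fourier (-m) (t j) - 1‖ < ε} := by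
  obtain ⟨s, hs⟩ : ∃ s : Finset ι, ∑' j : {j // j ∉ s}, ‖c j‖ < ε / 4 :=
    ((tendsto_order.1 (tendsto_tsum_compl_atTop_zero fun j => ‖c j‖)).2 _ (by positivity)).exists
  set W := ∑' j, ‖c j‖
  have hW : 0 ≤ W := tsum_nonneg fun j => norm_nonneg _
  set δ := ε / (2 * (W + 1))
  have hδ : 0 < δ := by positivity
  have hδW : δ * W ≤ ε / 2 := calc
    δ * W ≤ δ * (W + 1) := by gcongr; linarith
    _ = ε / 2 := by simp only [δ]; field_simp
  refine (isRelativelyDense_forall_norm_fourier_sub_one_lt t s hδ).mono fun m hm => ?_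
  calc _ ≤ δ * W + 2 * ∑' j : {j // j ∉ s}, ‖c j‖ :=
        tsum_mul_le_of_le_on_finset hc (fun j => norm_nonneg _) (fun j => norm_nonneg _)
          (fun j => norm_fourier_apply_sub_one_le _ _) hδ.le s fun j hj => (hm j hj).le
    _ < ε := by linarith

end DiscreteMeasure

/-- The Fourier–Stieltjes coefficients of a discrete measure `μ = ∑ c j • δ_{t j}` (with
`∑ ‖c j‖ < ∞`) form an almost periodic sequence.  Here `μ̂ n = ∑' j, c j * e^{-i n t_j}`. -/
theorem stmt_9 (c : ℕ → ℂ) (t : ℕ → AddCircle (2 * π))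
    (hc : Summable fun j => ‖c j‖) :
    AlmostPeriodic fun n : ℤ => ∑' j : ℕ, c j * fourier (-n) (t j) := by
  rw [almostPeriodic_iff_isRelativelyDense]
  intro ε hε
  exact (isRelativelyDense_tsum_norm_mul_norm_fourier_sub_one_lt c t hc hε).mono
    fun m hm n => (norm_tsum_mul_fourier_add_sub_le c t hc m n).trans_lt hm
end

section
/- For the Riesz product μ = ∏_{k∈X} (1 + cos(n_k t)) built on a subset X ⊆ {n_k : k ∈ ℕ} of a lacunary sequence with ratio ≥ 3, one has μ̂(n) = 1/2 for every n ∈ X. Moreover, if Y ⊆ {n_k} is disjoint from X and ν is the Riesz product built on Y, then ν̂(n) = 0 for all sufficiently large n ∈ X. Consequently, for two ultrafilters U, V on X containing disjoint sets, lim_U μ̂_X = 1/2 ≠ 0 = lim_V μ̂_X for suitable Riesz products, so the map from βX to 𝔐(M(𝕋)) sending an ultrafilter U to the character μ ↦ lim_U μ̂(n) is injective. -/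
/-!
Multiplying a function by `1 + c cos (p t)` replaces its Fourier coefficient at `m` by
`f̂(m) + c/2 (f̂(m - p) + f̂(m + p))`. Hence the `N`-th partial Riesz product has spectrum in
`[-S_N, S_N]` with `S_N = n_0 + ⋯ + n_{N-1}`, and lacunarity gives `n_N > 2 S_N`, so the new factor
leaves every coefficient at `|m| ≤ S_N` unchanged. The coefficient at `0` therefore stays `1` and
the one at `n_j` is `a_j / 2` from step `j + 1` on. For Riesz products on indicator sets this is
`1/2` on the set and `0` off it, so `μ̂_U` is constantly `1/2` on a set in `U` and `0` on one
in `V`.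
-/

open Real Filter

/-- The `m`-th Fourier–Stieltjes coefficient of the `N`-th partial Riesz product
`∏_{k<N} (1 + a_k cos (n_k t)) · dt/(2π)`. -/
noncomputable def rieszCoeff (n : ℕ → ℕ) (a : ℕ → ℝ) (N : ℕ) (m : ℤ) : ℂ :=
  (1 / (2 * π) : ℝ) * ∫ t in (0 : ℝ)..(2 * π),
    ((∏ k ∈ Finset.range N, (1 + a k * Real.cos ((n k : ℝ) * t)) : ℝ) : ℂ) *
      Complex.exp (-((m : ℝ) * t : ℝ) * Complex.I)

noncomputable def circleCoeff (f : ℝ → ℂ) (m : ℤ) : ℂ :=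
  (1 / (2 * π) : ℝ) * ∫ t in (0 : ℝ)..(2 * π), f t * Complex.exp (-((m : ℝ) * t : ℝ) * Complex.I)

lemma integral_exp_neg_int_mul_I (m : ℤ) :
    (∫ t in (0 : ℝ)..(2 * π), Complex.exp (-((m : ℝ) * t : ℝ) * Complex.I))
      = if m = 0 then (2 * π : ℂ) else 0 := by
  split_ifs with hm
  · simp [hm]
  have hc : -(m : ℂ) * Complex.I ≠ 0 := by simp [hm]
  have hexp : ∀ t : ℝ, Complex.exp (-((m : ℝ) * t : ℝ) * Complex.I)
      = Complex.exp ((-(m : ℂ) * Complex.I) * t) := fun t => by push_cast; ring_nf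
  have hperiod : (-(m : ℂ) * Complex.I) * (2 * π : ℝ) = (-m : ℤ) * (2 * π * Complex.I) := by
    push_cast; ring
  simp only [hexp, integral_exp_mul_complex hc, hperiod, Complex.exp_int_mul_two_pi_mul_I]
  simp

lemma circleCoeff_one (m : ℤ) : circleCoeff 1 m = if m = 0 then 1 else 0 := by
  simp only [circleCoeff, Pi.one_apply, one_mul, integral_exp_neg_int_mul_I]
  split_ifs
  · push_cast; field_simp
  · simp

lemma circleCoeff_mul_one_add_cos {f : ℝ → ℂ} (hf : Continuous f) (c : ℝ) (p : ℤ) (m : ℤ) :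
    circleCoeff (fun t => f t * ((1 + c * Real.cos (p * t) : ℝ) : ℂ)) m
      = circleCoeff f m + c / 2 * (circleCoeff f (m - p) + circleCoeff f (m + p)) := by
  have hint : ∀ m' : ℤ, IntervalIntegrable
      (fun t : ℝ => f t * Complex.exp (-((m' : ℝ) * t : ℝ) * Complex.I))
      MeasureTheory.volume 0 (2 * π) :=
    fun m' => (by fun_prop : Continuous _).intervalIntegrable _ _
  -- `cos (p t) = (e^{ipt} + e^{-ipt}) / 2` shifts the frequency `m` to `m ∓ p`.
  have hsplit : ∀ t : ℝ, f t * ((1 + c * Real.cos (p * t) : ℝ) : ℂ)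
        * Complex.exp (-((m : ℝ) * t : ℝ) * Complex.I)
      = f t * Complex.exp (-((m : ℝ) * t : ℝ) * Complex.I)
        + c / 2 * (f t * Complex.exp (-(((m - p : ℤ) : ℝ) * t : ℝ) * Complex.I)
          + f t * Complex.exp (-(((m + p : ℤ) : ℝ) * t : ℝ) * Complex.I)) := by
    intro t
    push_cast
    rw [Complex.cos, show -(((m : ℂ) - p) * t) * Complex.I
        = p * t * Complex.I + -((m : ℂ) * t) * Complex.I by ring,
      show -(((m : ℂ) + p) * t) * Complex.I
        = -(p * t) * Complex.I + -((m : ℂ) * t) * Complex.I by ring,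
      Complex.exp_add, Complex.exp_add]
    ring
  simp only [circleCoeff, hsplit]
  rw [intervalIntegral.integral_add (hint m) (((hint _).add (hint _)).const_mul _),
    intervalIntegral.integral_const_mul, intervalIntegral.integral_add (hint _) (hint _)]
  ring

section RieszCoeff

variable (n : ℕ → ℕ) (a : ℕ → ℝ)

lemma rieszCoeff_eq_circleCoeff (N : ℕ) (m : ℤ) :
    rieszCoeff n a N m
      = circleCoeff (fun t => ((∏ k ∈ Finset.range N, (1 + a k * Real.cos (n k * t)) : ℝ) : ℂ)) m :=
  rfl

lemma rieszCoeff_zero (m : ℤ) : rieszCoeff n a 0 m = if m = 0 then 1 else 0 := by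
  simp only [rieszCoeff_eq_circleCoeff, Finset.range_zero, Finset.prod_empty, Complex.ofReal_one]
  exact circleCoeff_one m

lemma rieszCoeff_succ (N : ℕ) (m : ℤ) :
    rieszCoeff n a (N + 1) m = rieszCoeff n a N m
      + a N / 2 * (rieszCoeff n a N (m - n N) + rieszCoeff n a N (m + n N)) := by
  have h := circleCoeff_mul_one_add_cos
    (f := fun t => ((∏ k ∈ Finset.range N, (1 + a k * Real.cos (n k * t)) : ℝ) : ℂ))
    (by fun_prop) (a N) (n N) m
  simp only [Int.cast_natCast, ← Complex.ofReal_mul, ← Finset.prod_range_succ] at h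
  exact h

lemma rieszCoeff_eq_zero_of_sum_lt (N : ℕ) (m : ℤ)
    (hm : ((∑ k ∈ Finset.range N, n k : ℕ) : ℤ) < |m|) :
    rieszCoeff n a N m = 0 := by
  induction N generalizing m with
  | zero =>
    rw [rieszCoeff_zero, if_neg]
    rintro rfl
    simp at hm
  | succ N ih =>
    push_cast [Finset.sum_range_succ] at hm ih
    have hle := abs_sub_abs_le_abs_sub m (n N)
    have hle' := abs_sub_abs_le_abs_sub m (-(n N : ℤ))
    simp only [abs_neg, Nat.abs_cast, sub_neg_eq_add] at hle hle'
    rw [rieszCoeff_succ, ih m (by omega), ih _ (by omega), ih _ (by omega)]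
    ring

variable {n}

lemma rieszCoeff_succ_of_abs_le {N : ℕ} (hgap : 2 * ∑ k ∈ Finset.range N, n k < n N) {m : ℤ}
    (hm : |m| ≤ ((∑ k ∈ Finset.range N, n k : ℕ) : ℤ)) :
    rieszCoeff n a (N + 1) m = rieszCoeff n a N m := by
  have hle := abs_sub_abs_le_abs_sub (n N : ℤ) m
  have hle' := abs_sub_abs_le_abs_sub (n N : ℤ) (-m)
  simp only [abs_neg, Nat.abs_cast, sub_neg_eq_add] at hle hle'
  rw [rieszCoeff_succ, rieszCoeff_eq_zero_of_sum_lt n a N (m - n N) (by rw [abs_sub_comm]; omega),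
    rieszCoeff_eq_zero_of_sum_lt n a N (m + n N) (by rw [add_comm]; omega)]
  ring

variable (hgap : ∀ N, 2 * ∑ k ∈ Finset.range N, n k < n N)
include hgap

lemma rieszCoeff_apply_zero (N : ℕ) : rieszCoeff n a N 0 = 1 := by
  induction N with
  | zero => simp [rieszCoeff_zero]
  | succ N ih => rw [rieszCoeff_succ_of_abs_le a (hgap N) (by rw [abs_zero]; positivity), ih]

lemma rieszCoeff_apply_freq {j N : ℕ} (hjN : j < N) : rieszCoeff n a N (n j) = a j / 2 := by
  induction N, hjN using Nat.le_induction with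
  | base =>
    have hj := hgap j
    rw [rieszCoeff_succ, sub_self, rieszCoeff_apply_zero a hgap,
      rieszCoeff_eq_zero_of_sum_lt n a j (n j) (by rw [Nat.abs_cast]; omega),
      rieszCoeff_eq_zero_of_sum_lt n a j (n j + n j) (by rw [abs_of_nonneg (by positivity)]; omega)]
    ring
  | succ N hjN ih =>
    have hjle : n j ≤ ∑ k ∈ Finset.range N, n k :=
      Finset.single_le_sum (fun k _ => Nat.zero_le (n k)) (Finset.mem_range.mpr hjN)
    rw [rieszCoeff_succ_of_abs_le a (hgap N) (by rw [Nat.abs_cast]; exact_mod_cast hjle), ih]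

lemma eq_of_tendsto_rieszCoeff_freq (j : ℕ) {z : ℂ}
    (h : Tendsto (fun N => rieszCoeff n a N (n j)) atTop (nhds z)) : z = a j / 2 :=
  tendsto_nhds_unique h <| tendsto_const_nhds.congr' <|
    (eventually_gt_atTop j).mono fun _ hjN => (rieszCoeff_apply_freq a hgap hjN).symm

end RieszCoeff

lemma two_mul_sum_range_lt_of_lacunary {n : ℕ → ℕ} (hpos : 0 < n 0)
    (hlac : ∀ k, 3 * n k ≤ n (k + 1)) (N : ℕ) : 2 * ∑ k ∈ Finset.range N, n k < n N := by
  induction N with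
  | zero => simpa using hpos
  | succ N ih =>
    rw [Finset.sum_range_succ]
    linarith [hlac N]

/-- For the Riesz product built on a subset `X` of a lacunary sequence (ratio ≥ 3), i.e.
with `a = 1` on `X` and `a = 0` elsewhere (encoded via the convergence of the coefficients
of partial products), one has `μ̂(n_k) = 1/2` for `k ∈ X`; the Riesz product built on a set
`Y` disjoint from `X` has `ν̂(n_k) = 0` for all sufficiently large `k ∈ X`; consequently,
for ultrafilters `U`, `V` containing the frequency images of disjoint subsets of `X`, the
Riesz product `μ_U` built on the `U`-part satisfies `lim_U μ̂_U = 1/2 ≠ 0 = lim_V μ̂_U`, so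
the map `βX → 𝔐(M(𝕋))`, `U ↦ (μ ↦ lim_U μ̂)`, is injective. -/
theorem stmt_19 (n : ℕ → ℕ) (hpos : ∀ k, 0 < n k) (hlac : ∀ k, 3 * n k ≤ n (k + 1))
    (KX KY : Set ℕ) (hdisj : Disjoint KX KY) (μX μY : ℤ → ℂ)
    (hX : ∀ m : ℤ, Tendsto (fun N => rieszCoeff n (KX.indicator fun _ => (1 : ℝ)) N m)
      atTop (nhds (μX m)))
    (hY : ∀ m : ℤ, Tendsto (fun N => rieszCoeff n (KY.indicator fun _ => (1 : ℝ)) N m)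
      atTop (nhds (μY m))) :
    (∀ k ∈ KX, μX ((n k : ℤ)) = 1 / 2) ∧
    (∃ M : ℕ, ∀ k ∈ KX, M ≤ k → μY ((n k : ℤ)) = 0) ∧
    (∀ KU KV : Set ℕ, KU ⊆ KX → KV ⊆ KX → Disjoint KU KV →
      ∀ μU : ℤ → ℂ,
        (∀ m : ℤ, Tendsto (fun N => rieszCoeff n (KU.indicator fun _ => (1 : ℝ)) N m)
          atTop (nhds (μU m))) →
        ∀ U V : Ultrafilter ℤ,
          ((fun k => (n k : ℤ)) '' KU ∈ U) → ((fun k => (n k : ℤ)) '' KV ∈ V) →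
          Tendsto μU (U : Filter ℤ) (nhds (1 / 2 : ℂ)) ∧
          Tendsto μU (V : Filter ℤ) (nhds (0 : ℂ))) := by
  have hgap := two_mul_sum_range_lt_of_lacunary (hpos 0) hlac
  have coeff_freq : ∀ (K : Set ℕ) (μ : ℤ → ℂ),
      (∀ m : ℤ, Tendsto (fun N => rieszCoeff n (K.indicator fun _ => (1 : ℝ)) N m)
        atTop (nhds (μ m))) → ∀ k, μ (n k) = K.indicator (fun _ => 1 / 2) k := by
    intro K μ hμ k
    rw [eq_of_tendsto_rieszCoeff_freq _ hgap k (hμ _)]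
    by_cases hk : k ∈ K <;> simp [hk]
  refine ⟨fun k hk => by simpa [hk] using coeff_freq KX μX hX k,
    ⟨0, fun k hk _ => by simpa [hdisj.notMem_of_mem_left hk] using coeff_freq KY μY hY k⟩, ?_⟩
  intro KU KV _ _ hUV μU hμU U V hU hV
  refine ⟨tendsto_nhds_of_eventually_eq (mem_of_superset hU ?_),
    tendsto_nhds_of_eventually_eq (mem_of_superset hV ?_)⟩
  · exact Set.image_subset_iff.mpr fun k hk => by simpa [hk] using coeff_freq KU μU hμU k
  · exact Set.image_subset_iff.mpr fun k hk => by
      simpa [hUV.notMem_of_mem_right hk] using coeff_freq KU μU hμU k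
end
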